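/- arXiv:1803.10012 — 3 statements merged into one kernel-verified Lean document; each statement's English description precedes it below -/
import Mathlib

section
/- The function f(z) = (1/(2π))(λ/z + conj(λ)), where λ = e^{iπ/4}, is holomorphic on the punctured unit disk, has the singularity expansion f(z) = (1/(2π))·λ/z + O(1) near 0, and satisfies the Riemann boundary condition Im[f(z)·√z] = 0 for every z on the unit circle (where the outer normal at a boundary point z of the unit disk is z itself). -/
open Complex Metric ComplexConjugate

/-- λ = e^{iπ/4} -/
noncomputable def lam : ℂ := Complex.exp ((Real.pi : ℂ) * Complex.I / 4)

/-- f_𝔻^0(z) = (1/(2π))(λ/z + conj λ) -/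
noncomputable def fD0 (z : ℂ) : ℂ := (1 / (2 * (Real.pi : ℂ))) * (lam / z + conj lam)

/-- The explicit function `fD0` is holomorphic on the punctured unit disk, differs from the
pole `(1/(2π))·λ/z` by a bounded quantity there, and satisfies the Riemann boundary condition
`Im[f(z)·√z] = 0` on the unit circle (the outer normal at `z` being `z` itself). -/
theorem stmt0 :
    DifferentiableOn ℂ fD0 (ball (0 : ℂ) 1 \ {0}) ∧
    (∃ C : ℝ, ∀ z ∈ ball (0 : ℂ) 1 \ {0},
      ‖fD0 z - (1 / (2 * (Real.pi : ℂ))) * lam / z‖ ≤ C) ∧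
    (∀ z : ℂ, ‖z‖ = 1 → (fD0 z * z ^ ((1 : ℂ) / 2)).im = 0) := by
  refine ⟨?_, ⟨‖(1 / (2 * (Real.pi : ℂ))) * conj lam‖, ?_⟩, ?_⟩
  · intro z hz
    have hz0 : z ≠ 0 := hz.2
    exact ((((differentiableAt_const lam).div differentiableAt_id hz0).add
      (differentiableAt_const _)).const_mul _).differentiableWithinAt
  · intro z hz
    have hz0 : z ≠ 0 := hz.2
    have : fD0 z - (1 / (2 * (Real.pi : ℂ))) * lam / z
        = (1 / (2 * (Real.pi : ℂ))) * conj lam := by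
      simp only [fD0]; ring
    rw [this]
  · intro z hz
    have hz0 : z ≠ 0 := by
      intro h; rw [h] at hz; simp at hz
    set w : ℂ := z ^ ((1 : ℂ) / 2) with hw
    have hw0 : w ≠ 0 := by
      simp [hw, Complex.cpow_eq_zero_iff, hz0]
    have hw2 : w * w = z := by
      rw [hw, ← Complex.cpow_add _ _ hz0]
      norm_num
    have hwnorm : ‖w‖ = 1 := by
      have := Complex.norm_cpow_of_ne_zero hz0 ((1 : ℂ) / 2)
      simp only [hw]
      rw [this, hz]
      simp
    have hinv : w⁻¹ = conj w := by
      rw [Complex.inv_def]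
      rw [show Complex.normSq w = 1 from by
        rw [Complex.normSq_eq_norm_sq, hwnorm]; norm_num]
      simp
    have hdiv : w / z = conj w := by
      rw [← hw2, ← hinv]
      field_simp
    have key : fD0 z * w
        = (1 / (2 * (Real.pi : ℂ))) * (conj (conj lam * w) + conj lam * w) := by
      simp only [fD0, map_mul, Complex.conj_conj]
      rw [← hdiv]
      field_simp
    have hre : conj (conj lam * w) + conj lam * w
        = ((2 * (conj lam * w).re : ℝ) : ℂ) := by
      rw [add_comm, Complex.add_conj]
      try push_cast
      try ring
    rw [key, hre]
    simp [Complex.mul_im, Complex.div_im]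
end

section
/- For a boundary point w on the unit circle, the function f_𝔻^w(z) := i√w / (2π(z − w)) is holomorphic on 𝔻 \ {w}, satisfies f_𝔻^w(z) = (1/(2π))·i√(n(w))/(z − w) near w (where n(w) = w is the outer normal), and satisfies Im[f_𝔻^w(z)·√z] = 0 for all z on the unit circle with z ≠ w. -/
open Complex

/-!
Put `a = √z`, `b = √w`, so that `z - w = a² - b²` and `ab / (a² - b²) = (u - u⁻¹)⁻¹` with
`u = a / b`. On the unit circle `u⁻¹ = ū`, so `u - u⁻¹ = 2i Im u` and
`i√w√z / (z - w) = 1 / (2 Im u)` is real.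
-/

namespace Complex

lemma sub_inv_eq_two_mul_I_mul_im {u : ℂ} (hu : ‖u‖ = 1) : u - u⁻¹ = 2 * I * u.im := by
  rw [inv_eq_conj hu]
  apply ext <;> simp; ring

lemma I_mul_inv_sub_inv_eq_ofReal {u : ℂ} (hu : ‖u‖ = 1) :
    I * (u - u⁻¹)⁻¹ = ((2 * u.im)⁻¹ : ℝ) := by
  rw [sub_inv_eq_two_mul_I_mul_im hu, mul_inv, mul_inv, ← mul_assoc, ← mul_assoc,
    mul_comm I, mul_assoc _ I, mul_inv_cancel₀ I_ne_zero]
  push_cast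
  ring

lemma im_I_mul_mul_div_sq_sub_sq_eq_zero {a b : ℂ} (hab : ‖a‖ = ‖b‖) :
    (I * a * b / (a ^ 2 - b ^ 2)).im = 0 := by
  rcases eq_or_ne b 0 with rfl | hb
  · simp
  have ha : a ≠ 0 := norm_ne_zero_iff.mp (hab ▸ norm_ne_zero_iff.mpr hb)
  have hu : ‖a / b‖ = 1 := by rw [norm_div, hab, div_self (norm_ne_zero_iff.mpr hb)]
  have hquot : I * a * b / (a ^ 2 - b ^ 2) = I * (a / b - (a / b)⁻¹)⁻¹ := by
    rw [inv_div, div_sub_div _ _ hb ha, inv_div]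
    ring
  rw [hquot, I_mul_inv_sub_inv_eq_ofReal hu, ofReal_im]

lemma norm_cpow_one_div_two (z : ℂ) : ‖z ^ ((1 : ℂ) / 2)‖ = √‖z‖ := by
  rw [one_div, ← Nat.cast_ofNat, norm_cpow_inv_nat, Real.sqrt_eq_rpow, Nat.cast_ofNat, one_div]

lemma cpow_one_div_two_sq (z : ℂ) : (z ^ ((1 : ℂ) / 2)) ^ 2 = z := by
  rw [one_div]
  exact cpow_ofNat_inv_pow z 2

end Complex

/-- For a boundary point `w` of the unit disk, the function
`f_𝔻^w(z) = i√w / (2π(z − w))` is holomorphic away from `w`, has the prescribed singularity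
`(1/(2π))·i√(n(w))/(z − w)` at `w` (with outer normal `n(w) = w`), and satisfies the Riemann
boundary condition `Im[f(z)·√z] = 0` on the unit circle away from `w`. -/
theorem stmt3 (w : ℂ) (hw : ‖w‖ = 1) :
    DifferentiableOn ℂ
      (fun z => Complex.I * w ^ ((1 : ℂ) / 2) / (2 * (Real.pi : ℂ) * (z - w)))
      {z : ℂ | z ≠ w} ∧
    (∀ z : ℂ, z ≠ w →
      Complex.I * w ^ ((1 : ℂ) / 2) / (2 * (Real.pi : ℂ) * (z - w))
        = (1 / (2 * (Real.pi : ℂ))) * (Complex.I * w ^ ((1 : ℂ) / 2)) / (z - w)) ∧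
    (∀ z : ℂ, ‖z‖ = 1 → z ≠ w →
      ((Complex.I * w ^ ((1 : ℂ) / 2) / (2 * (Real.pi : ℂ) * (z - w)))
        * z ^ ((1 : ℂ) / 2)).im = 0) := by
  have hpi : (2 * Real.pi : ℂ) ≠ 0 := by exact_mod_cast Real.two_pi_pos.ne'
  refine ⟨?_, fun z hz => ?_, fun z hz _ => ?_⟩
  · refine (differentiableOn_const _).div (by fun_prop) fun z hz => ?_
    exact mul_ne_zero hpi (sub_ne_zero.mpr hz)
  · have : z - w ≠ 0 := sub_ne_zero.mpr hz
    field_simp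
  · set a := z ^ ((1 : ℂ) / 2)
    set b := w ^ ((1 : ℂ) / 2)
    have hab : ‖a‖ = ‖b‖ := by rw [norm_cpow_one_div_two, norm_cpow_one_div_two, hz, hw]
    have hfactor : I * b / (2 * Real.pi * (z - w)) * a
        = ((2 * Real.pi)⁻¹ : ℝ) * (I * a * b / (a ^ 2 - b ^ 2)) := by
      rw [cpow_one_div_two_sq, cpow_one_div_two_sq]
      push_cast
      field_simp
    rw [hfactor, im_ofReal_mul, im_I_mul_mul_div_sq_sub_sq_eq_zero hab, mul_zero]
end

section
/- S-holomorphicity implies closedness of the square-differential: let z, z₁, z₂, z₃, z₄ be the center and corners of a lattice cell, with adjacent squares u_I, v_λ̄, u_R, v_λ carrying projection directions i, λ̄, 1, λ respectively (λ = e^{iπ/4}). If a complex number W satisfies the s-holomorphicity relations F(u_R) = Proj₁(W) = Re(W), F(u_I) = Proj_i(W) = i·Im(W), F(v_λ) = Proj_λ(W), F(v_λ̄) = Proj_{λ̄}(W), where Proj_τ(z) = τ·Re(z·conj(τ)), then |W|² = F(u_R)² − F(u_I)² = i·(F(v_λ̄)² − F(v_λ)²). Consequently the increments of H defined by H(z₂)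 − H(z₁) = (F(a))²·(z₂ − z₁) over the four faces around the cell sum to zero. -/
/-!
For a unit vector `τ` one has `Proj_τ W = (W + τ² W̄) / 2` and `Proj_{iτ} W = (W − τ² W̄) / 2`,
so `(Proj_τ W)² − (Proj_{iτ} W)² = τ² |W|²`. Taking `τ = 1` and `τ = λ̄` (with `iλ̄ = λ`,
`λ̄² = −i`) gives the two expressions for `|W|²`; the four face increments around the cell are
then `t(i − 1)` times the first and `t(1 + i)` times the second difference, and cancel.
-/

open Complex ComplexConjugate

/-- Projection onto the direction `τ`: `Proj_τ(z) = τ·Re(z·conj τ)`. -/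
noncomputable def Proj (τ z : ℂ) : ℂ := τ * ((z * conj τ).re : ℂ)

lemma Proj_eq_of_norm_eq_one {τ : ℂ} (hτ : ‖τ‖ = 1) (W : ℂ) :
    Proj τ W = (W + τ ^ 2 * conj W) / 2 := by
  have hττ : τ * conj τ = 1 := by rw [mul_conj', hτ]; norm_num
  rw [Proj, re_eq_add_conj, map_mul, conj_conj]
  linear_combination W / 2 * hττ

lemma sq_Proj_sub_sq_Proj_I_mul {τ : ℂ} (hτ : ‖τ‖ = 1) (W : ℂ) :
    Proj τ W ^ 2 - Proj (I * τ) W ^ 2 = τ ^ 2 * ((‖W‖ : ℝ) : ℂ) ^ 2 := by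
  have hIτ : ‖I * τ‖ = 1 := by rw [norm_mul, norm_I, hτ, one_mul]
  rw [Proj_eq_of_norm_eq_one hτ, Proj_eq_of_norm_eq_one hIτ, ← mul_conj', mul_pow, I_sq]
  ring

lemma norm_lam : ‖lam‖ = 1 := by
  rw [lam, show (Real.pi : ℂ) * I / 4 = ((Real.pi / 4 : ℝ) : ℂ) * I by push_cast; ring]
  exact norm_exp_ofReal_mul_I _

lemma lam_sq : lam ^ 2 = I := by
  rw [lam, ← exp_nat_mul]
  convert exp_pi_div_two_mul_I using 2
  push_cast
  ring

lemma I_mul_conj_lam : I * conj lam = lam := by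
  rw [← lam_sq, sq, mul_assoc, mul_conj', norm_lam]
  norm_num

lemma conj_lam_sq : conj lam ^ 2 = -I := by
  rw [← map_pow, lam_sq, conj_I]

/-- S-holomorphicity implies closedness of the square differential: for any `W ∈ ℂ`,
`|W|² = (Proj₁ W)² − (Proj_i W)² = i·((Proj_λ̄ W)² − (Proj_λ W)²)`; consequently the increments
`H(z₂) − H(z₁) = (F(a))²·(z₂ − z₁)` of the primitive `H` around the four faces of a lattice cell
(with corners `z ± t`, `z ± t·i` and face values the projections of the vertex value `W` in the
directions `1, λ, i, λ̄`) sum to zero. -/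
theorem stmt10 (W : ℂ) :
    ((‖W‖ : ℝ) : ℂ) ^ 2 = (Proj 1 W) ^ 2 - (Proj Complex.I W) ^ 2 ∧
    ((‖W‖ : ℝ) : ℂ) ^ 2
      = Complex.I * ((Proj (conj lam) W) ^ 2 - (Proj lam W) ^ 2) ∧
    ∀ z t : ℂ,
      (Proj 1 W) ^ 2 * ((z + t * Complex.I) - (z + t))
        + (Proj lam W) ^ 2 * ((z - t) - (z + t * Complex.I))
        + (Proj Complex.I W) ^ 2 * ((z - t * Complex.I) - (z - t))
        + (Proj (conj lam) W) ^ 2 * ((z + t) - (z - t * Complex.I)) = 0 := by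
  have h1 := sq_Proj_sub_sq_Proj_I_mul norm_one W
  have hlam := sq_Proj_sub_sq_Proj_I_mul (by rw [norm_conj, norm_lam]) W
  rw [mul_one, one_pow, one_mul] at h1
  rw [I_mul_conj_lam, conj_lam_sq] at hlam
  refine ⟨h1.symm, by linear_combination -I * hlam + ((‖W‖ : ℝ) : ℂ) ^ 2 * I_sq, fun z t => ?_⟩
  linear_combination t * (I - 1) * h1 + t * (1 + I) * hlam - t * ((‖W‖ : ℝ) : ℂ) ^ 2 * I_sq
end
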